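/- arXiv:1808.00986 — 3 statements merged into one kernel-verified Lean document; each statement's English description precedes it below -/
import Mathlib

section
/- For every i with k < i ≤ n, the probability that a uniformly random permutation σ of {1,…,n} satisfies both σ(i) = n and that the maximum of σ over positions 1,…,i−1 is attained at a position ≤ k equals k/(n(i−1)); that is, n · (i−1) · |U_i| = k · n!. -/
/-- `Rev n i`: the event (set of permutations of `Fin n`) that the maximum rank `n`
appears at (1-based) position `i`. -/
def Rev (n i : ℕ) : Finset (Equiv.Perm (Fin n)) :=
  Finset.univ.filter (fun σ => ∃ j : Fin n, (j : ℕ) + 1 = i ∧ (σ j : ℕ) + 1 = n)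

/-- `Tev n k i`: the event that the maximum of `σ` over (1-based) positions `1, …, i-1`
is attained at a position `≤ k`. -/
def Tev (n k i : ℕ) : Finset (Equiv.Perm (Fin n)) :=
  Finset.univ.filter (fun σ => ∃ j : Fin n, (j : ℕ) + 1 ≤ k ∧
    ∀ j' : Fin n, (j' : ℕ) + 1 < i → σ j' ≤ σ j)

/-- `Uev n k i = Rev n i ∩ Tev n k i`: the threshold algorithm successfully selects the
overall maximum located at position `i`. -/
def Uev (n k i : ℕ) : Finset (Equiv.Perm (Fin n)) := Rev n i ∩ Tev n k i

/-- The success event `U = ⋃_{i=k+1}^{n} U_i`. -/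
def Usucc (n k : ℕ) : Finset (Equiv.Perm (Fin n)) :=
  (Finset.Ioc k n).biUnion (fun i => Uev n k i)

/-!
Let `i₀ = i - 1` be the (0-based) position of `σ(i)` and `P = {0, …, i₀ - 1}` the positions
before it. Among the `n!/n` permutations with `σ i₀ = n - 1`, right multiplication by the
transposition of two positions `p, q ∈ P` fixes `i₀` and moves the maximum over `P` from `p` to
`q`. Hence the position of that maximum is uniformly distributed on `P`, and `U_i`, where it lies
among the first `k` positions, has `k / (i - 1)` of them.
-/

open Finset Equiv

section
variable {α : Type*} [Fintype α] [DecidableEq α]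

theorem card_filter_perm_apply_eq_congr (a b c : α) :
    #{σ : Perm α | σ a = b} = #{σ : Perm α | σ a = c} :=
  card_nbij' (swap b c * ·) (swap b c * ·)
    (fun σ hσ => by simp_all [Perm.mul_apply])
    (fun σ hσ => by simp_all [Perm.mul_apply])
    (fun σ _ => by simp [← mul_assoc])
    (fun σ _ => by simp [← mul_assoc])

theorem card_mul_card_filter_perm_apply_eq (a b : α) :
    Fintype.card α * #{σ : Perm α | σ a = b} = (Fintype.card α).factorial := by
  calc Fintype.card α * #{σ : Perm α | σ a = b} = ∑ c, #{σ : Perm α | σ a = c} := by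
        rw [sum_const_nat fun c _ => card_filter_perm_apply_eq_congr a c b, card_univ]
    _ = #(univ : Finset (Perm α)) := (card_eq_sum_card_fiberwise (by simp)).symm
    _ = (Fintype.card α).factorial := by rw [card_univ, Fintype.card_perm]

end

section
variable {α : Type*} [Fintype α] [LinearOrder α]

def applyEqAndMaxOnAt (a b : α) (s : Finset α) (p : α) : Finset (Perm α) :=
  {σ | σ a = b ∧ ∀ j ∈ s, σ j ≤ σ p}

variable {a b : α} {s : Finset α}

theorem swap_mul_mem_applyEqAndMaxOnAt (ha : a ∉ s) {p q : α} (hp : p ∈ s) (hq : q ∈ s)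
    {σ : Perm α} (hσ : σ ∈ applyEqAndMaxOnAt a b s p) :
    σ * swap p q ∈ applyEqAndMaxOnAt a b s q := by
  simp only [applyEqAndMaxOnAt, mem_filter, mem_univ, true_and, Perm.mul_apply,
    swap_apply_right] at hσ ⊢
  obtain ⟨hσa, hσmax⟩ := hσ
  refine ⟨by rwa [swap_apply_of_ne_of_ne (ne_of_mem_of_not_mem hp ha).symm
    (ne_of_mem_of_not_mem hq ha).symm], fun j hj => hσmax _ ?_⟩
  rcases eq_or_ne j p with rfl | hjp
  · simpa using hq
  rcases eq_or_ne j q with rfl | hjq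
  · simpa using hp
  · rwa [swap_apply_of_ne_of_ne hjp hjq]

theorem card_applyEqAndMaxOnAt_congr (ha : a ∉ s) {p q : α} (hp : p ∈ s) (hq : q ∈ s) :
    #(applyEqAndMaxOnAt a b s p) = #(applyEqAndMaxOnAt a b s q) :=
  card_nbij' (· * swap p q) (· * swap q p)
    (fun _ hσ => swap_mul_mem_applyEqAndMaxOnAt ha hp hq hσ)
    (fun _ hσ => swap_mul_mem_applyEqAndMaxOnAt ha hq hp hσ)
    (fun σ _ => by simp [mul_assoc, swap_comm])
    (fun σ _ => by simp [mul_assoc, swap_comm])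

theorem pairwiseDisjoint_applyEqAndMaxOnAt :
    (s : Set α).PairwiseDisjoint (applyEqAndMaxOnAt a b s) := by
  intro p hp q hq hpq
  rw [Function.onFun, disjoint_left]
  refine fun σ hσp hσq => hpq (σ.injective ?_)
  simp only [applyEqAndMaxOnAt, mem_filter, mem_univ, true_and] at hσp hσq
  exact le_antisymm (hσq.2 p hp) (hσp.2 q hq)

theorem biUnion_applyEqAndMaxOnAt (hs : s.Nonempty) :
    s.biUnion (applyEqAndMaxOnAt a b s) = ({σ : Perm α | σ a = b} : Finset (Perm α)) := by
  ext σ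
  simp only [applyEqAndMaxOnAt, mem_biUnion, mem_filter, mem_univ, true_and]
  refine ⟨fun ⟨_, _, hσa, _⟩ => hσa, fun hσa => ?_⟩
  obtain ⟨p, hp, hmax⟩ := s.exists_max_image σ hs
  exact ⟨p, hp, hσa, hmax⟩

theorem card_mul_card_filter_exists_maxOnAt (ha : a ∉ s) {t : Finset α} (hts : t ⊆ s) :
    #s * #{σ : Perm α | σ a = b ∧ ∃ p ∈ t, ∀ j ∈ s, σ j ≤ σ p} =
      #t * #{σ : Perm α | σ a = b} := by
  obtain rfl | ⟨p₀, hp₀⟩ := s.eq_empty_or_nonempty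
  · simp [subset_empty.1 hts]
  have hcard (s' : Finset α) (hs' : s' ⊆ s) :
      #(s'.biUnion (applyEqAndMaxOnAt a b s)) = #s' * #(applyEqAndMaxOnAt a b s p₀) := by
    rw [card_biUnion (pairwiseDisjoint_applyEqAndMaxOnAt.subset hs')]
    exact sum_const_nat fun p hp => card_applyEqAndMaxOnAt_congr ha (hs' hp) hp₀
  have hevent : ({σ : Perm α | σ a = b ∧ ∃ p ∈ t, ∀ j ∈ s, σ j ≤ σ p} : Finset (Perm α)) =
      t.biUnion (applyEqAndMaxOnAt a b s) := by
    ext σ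
    simp only [applyEqAndMaxOnAt, mem_biUnion, mem_filter, mem_univ, true_and]
    exact ⟨fun ⟨hσa, p, hp, hmax⟩ => ⟨p, hp, hσa, hmax⟩,
      fun ⟨p, hp, hσa, hmax⟩ => ⟨hσa, p, hp, hmax⟩⟩
  rw [hevent, hcard t hts, ← biUnion_applyEqAndMaxOnAt (a := a) (b := b) ⟨p₀, hp₀⟩,
    hcard s subset_rfl]
  ring

end

theorem Uev_eq_filter {n k i : ℕ} (hkn : k < n) (hi : 0 < i) (hin : i ≤ n) :
    Uev n k i = ({σ : Perm (Fin n) | σ ⟨i - 1, by omega⟩ = ⟨n - 1, by omega⟩ ∧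
      ∃ p ∈ Iio ⟨k, hkn⟩, ∀ j ∈ Iio ⟨i - 1, by omega⟩, σ j ≤ σ p} : Finset (Perm (Fin n))) := by
  ext σ
  simp only [Uev, Rev, Tev, mem_inter, mem_filter, mem_univ, true_and, mem_Iio, Fin.ext_iff,
    Fin.lt_def]
  constructor
  · rintro ⟨⟨j, hj, hσj⟩, p, hp, hmax⟩
    rw [← show j = ⟨i - 1, by omega⟩ from Fin.ext (by dsimp only; omega)]
    exact ⟨by omega, p, by omega, fun j hj => hmax j (by omega)⟩
  · rintro ⟨hσ, p, hp, hmax⟩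
    exact ⟨⟨⟨i - 1, by omega⟩, by dsimp only; omega, by omega⟩, p, by omega,
      fun j hj => hmax j (by omega)⟩

theorem stmt3_general (n k : ℕ) (hkn : k < n) :
    ∀ i : ℕ, k < i → i ≤ n →
      n * (i - 1) * (Uev n k i).card = k * Nat.factorial n := by
  intro i hki hin
  set i₀ : Fin n := ⟨i - 1, by omega⟩
  set top : Fin n := ⟨n - 1, by omega⟩
  have hU : (i - 1) * #(Uev n k i) = k * #{σ : Perm (Fin n) | σ i₀ = top} := by
    have := card_mul_card_filter_exists_maxOnAt (a := i₀) (b := top) (s := Iio i₀)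
      (t := Iio ⟨k, hkn⟩) (by simp) (Iio_subset_Iio (by simp [Fin.le_def, i₀]; omega))
    rw [Fin.card_Iio, Fin.card_Iio] at this
    rw [Uev_eq_filter hkn (by omega) hin]
    convert this using 4
  have hall := card_mul_card_filter_perm_apply_eq i₀ top
  rw [Fintype.card_fin] at hall
  calc n * (i - 1) * #(Uev n k i) = k * (n * #{σ : Perm (Fin n) | σ i₀ = top}) := by
        rw [mul_assoc, hU]; ring
    _ = k * n.factorial := by rw [hall]

theorem stmt3 (n k : ℕ) (hk : 1 ≤ k) (hkn : k < n) :
    ∀ i : ℕ, k < i → i ≤ n →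
      n * (i - 1) * (Uev n k i).card = k * Nat.factorial n :=
  stmt3_general n k hkn
end

section
/- The success probability of the threshold algorithm satisfies the exact formula Pr(U) = (k/n) · Σ_{i=k}^{n−1} (1/i); that is, |U| / n! = (k/n) · Σ_{i=k}^{n−1} (1/i). -/
/-!
The maximum sits at position `i` for exactly `(n - 1)!` permutations. Among those, the
maximum of the first `i - 1` values is equally likely to sit at each of these positions:
right multiplication by the transposition of two such positions maps one of these events
bijectively onto the other. Hence exactly a fraction `k / (i - 1)` of them succeed, and
summing `k (n - 1)! / (i - 1)` over `k < i ≤ n` gives the formula.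
-/

open Finset Equiv Nat

namespace Equiv.Perm

variable {α : Type*} [Fintype α]

section

variable [DecidableEq α]

theorem card_filter_apply_eq (p t : α) :
    #{σ : Perm α | σ p = t} = (Fintype.card α - 1)! := by
  have hfiber (t' : α) : #{σ : Perm α | σ p = t'} = #{σ : Perm α | σ p = t} :=
    card_nbij' (swap t' t * ·) (swap t' t * ·)
      (fun σ hσ => by simp_all) (fun σ hσ => by simp_all)
      (fun σ _ => by simp [← mul_assoc]) (fun σ _ => by simp [← mul_assoc])
  have hcard : Fintype.card α * #{σ : Perm α | σ p = t} = (Fintype.card α)! := by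
    rw [← Fintype.card_perm, ← Finset.card_univ (α := Perm α),
      card_eq_sum_card_fiberwise (f := fun σ : Perm α => σ p) (s := univ) (t := univ)
        fun _ _ => mem_univ _]
    simp [hfiber]
  have hα : 0 < Fintype.card α := Fintype.card_pos_iff.mpr ⟨p⟩
  rw [← mul_factorial_pred hα.ne'] at hcard
  exact Nat.eq_of_mul_eq_mul_left hα hcard

end

variable [LinearOrder α]

def argmaxEvent (S : Finset α) (p t j : α) : Finset (Perm α) :=
  {σ | σ p = t ∧ ∀ x ∈ S, σ x ≤ σ j}

variable {S : Finset α} {p t j j' : α}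

theorem mem_argmaxEvent {σ : Perm α} :
    σ ∈ argmaxEvent S p t j ↔ σ p = t ∧ ∀ x ∈ S, σ x ≤ σ j := by
  simp [argmaxEvent]

theorem mul_swap_mem_argmaxEvent (hp : p ∉ S) (hj : j ∈ S) (hj' : j' ∈ S) {σ : Perm α}
    (hσ : σ ∈ argmaxEvent S p t j) : σ * swap j j' ∈ argmaxEvent S p t j' := by
  rw [mem_argmaxEvent] at hσ ⊢
  obtain ⟨hσp, hσmax⟩ := hσ
  refine ⟨?_, fun x hx => ?_⟩
  · rwa [mul_apply, swap_apply_of_ne_of_ne (ne_of_mem_of_not_mem hj hp).symm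
      (ne_of_mem_of_not_mem hj' hp).symm]
  · rw [mul_apply, mul_apply, swap_apply_right]
    rcases eq_or_ne x j with rfl | hxj
    · rw [swap_apply_left]; exact hσmax j' hj'
    rcases eq_or_ne x j' with rfl | hxj'
    · rw [swap_apply_right]
    rw [swap_apply_of_ne_of_ne hxj hxj']; exact hσmax x hx

theorem card_argmaxEvent_congr (hp : p ∉ S) (hj : j ∈ S) (hj' : j' ∈ S) :
    #(argmaxEvent S p t j) = #(argmaxEvent S p t j') :=
  card_nbij' (· * swap j j') (· * swap j j')
    (fun _ hσ => mul_swap_mem_argmaxEvent hp hj hj' hσ)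
    (fun _ hσ => swap_comm j j' ▸ mul_swap_mem_argmaxEvent hp hj' hj hσ)
    (fun σ _ => by simp [mul_assoc]) (fun σ _ => by simp [mul_assoc])

theorem pairwiseDisjoint_argmaxEvent :
    (S : Set α).PairwiseDisjoint (argmaxEvent S p t) := by
  intro j hj j' hj' hne
  refine disjoint_left.mpr fun σ hσ hσ' => hne (σ.injective ?_)
  exact le_antisymm ((mem_argmaxEvent.mp hσ').2 j hj) ((mem_argmaxEvent.mp hσ).2 j' hj')

theorem biUnion_argmaxEvent (hS : S.Nonempty) :
    S.biUnion (argmaxEvent S p t) = ({σ : Perm α | σ p = t} : Finset (Perm α)) := by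
  ext σ
  simp only [mem_biUnion, mem_argmaxEvent, mem_filter, mem_univ, true_and]
  refine ⟨fun ⟨_, _, hσp, _⟩ => hσp, fun hσp => ?_⟩
  obtain ⟨j, hj, hmax⟩ := exists_max_image S σ hS
  exact ⟨j, hj, hσp, hmax⟩

theorem card_biUnion_argmaxEvent {T : Finset α} (hp : p ∉ S) (hTS : T ⊆ S) (hj : j ∈ S) :
    #(T.biUnion (argmaxEvent S p t)) = #T * #(argmaxEvent S p t j) := by
  rw [card_biUnion (pairwiseDisjoint_argmaxEvent.subset hTS),
    sum_congr rfl fun j' hj' => card_argmaxEvent_congr hp (hTS hj') hj, sum_const, smul_eq_mul]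

theorem card_mul_card_argmaxEvent (hp : p ∉ S) (hj : j ∈ S) :
    #S * #(argmaxEvent S p t j) = (Fintype.card α - 1)! := by
  rw [← card_biUnion_argmaxEvent hp subset_rfl hj, biUnion_argmaxEvent ⟨j, hj⟩,
    card_filter_apply_eq]

end Equiv.Perm

open Equiv.Perm

theorem mem_Rev_succ {n : ℕ} (p : Fin n) {σ : Perm (Fin n)} :
    σ ∈ Rev n (p + 1) ↔ σ p = ⟨n - 1, Nat.sub_one_lt_of_lt p.isLt⟩ := by
  simp only [Rev, mem_filter, mem_univ, true_and, Fin.ext_iff, add_left_inj]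
  constructor
  · rintro ⟨j, hjp, hσj⟩
    rw [← Fin.ext hjp]
    omega
  · intro hσp
    exact ⟨p, rfl, by omega⟩

theorem disjoint_Rev {n i i' : ℕ} (hne : i ≠ i') : Disjoint (Rev n i) (Rev n i') := by
  refine disjoint_left.mpr fun σ hσ hσ' => hne ?_
  simp only [Rev, mem_filter, mem_univ, true_and] at hσ hσ'
  obtain ⟨j, rfl, hσj⟩ := hσ
  obtain ⟨j', rfl, hσj'⟩ := hσ'
  rw [σ.injective (Fin.ext (by omega) : σ j = σ j')]

theorem Uev_succ_eq {n k : ℕ} (p : Fin n) (hkp : k ≤ p) :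
    Uev n k (p + 1) =
      (Iio ⟨k, hkp.trans_lt p.isLt⟩).biUnion
        (argmaxEvent (Iio p) p ⟨n - 1, Nat.sub_one_lt_of_lt p.isLt⟩) := by
  ext σ
  simp only [Uev, Tev, mem_inter, mem_Rev_succ, mem_filter, mem_univ, true_and, mem_biUnion,
    mem_argmaxEvent, mem_Iio, Fin.lt_def, Nat.lt_iff_add_one_le, add_lt_add_iff_right]
  constructor
  · rintro ⟨hσp, j, hjk, hmax⟩
    exact ⟨j, hjk, hσp, fun x hx => hmax x (by omega)⟩
  · rintro ⟨j, hjk, hσp, hmax⟩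
    exact ⟨hσp, j, hjk, fun x hx => hmax x (by omega)⟩

theorem card_Uev_succ {n k i : ℕ} (hk : 1 ≤ k) (hki : k ≤ i) (hin : i < n) :
    i * #(Uev n k (i + 1)) = k * (n - 1)! := by
  let p : Fin n := ⟨i, hin⟩
  have h0 : (⟨0, by omega⟩ : Fin n) ∈ Iio p := mem_Iio.mpr (Fin.mk_lt_mk.mpr (by omega))
  have hmax := card_mul_card_argmaxEvent (t := ⟨n - 1, by omega⟩) notMem_Iio_self h0
  rw [Fin.card_Iio, Fintype.card_fin] at hmax
  rw [Uev_succ_eq p hki, card_biUnion_argmaxEvent notMem_Iio_self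
    (Iio_subset_Iio (Fin.mk_le_mk.mpr hki)) h0, Fin.card_Iio, ← hmax]
  ring

theorem card_Usucc (n k : ℕ) : #(Usucc n k) = ∑ i ∈ Ioc k n, #(Uev n k i) :=
  card_biUnion fun _ _ _ _ hne =>
    (disjoint_Rev hne).mono inter_subset_left inter_subset_left

theorem stmt4 (n k : ℕ) (hk : 1 ≤ k) (hkn : k < n) :
    ((Usucc n k).card : ℝ) / (Nat.factorial n : ℝ) =
      ((k : ℝ) / (n : ℝ)) * ∑ i ∈ Finset.Icc k (n - 1), (1 : ℝ) / (i : ℝ) := by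
  have hIoc : Ioc k n = (Icc k (n - 1)).map (addRightEmbedding 1) := by
    rw [map_add_right_Icc, Nat.sub_add_cancel (by omega), Icc_add_one_left_eq_Ioc]
  have hfac : (n ! : ℝ) = n * (n - 1)! := by exact_mod_cast (mul_factorial_pred (by omega)).symm
  have hterm : ∀ i ∈ Icc k (n - 1), (#(Uev n k (i + 1)) : ℝ) / n ! = k / n * (1 / i) := by
    intro i hi
    rw [mem_Icc] at hi
    have hcard : (i : ℝ) * #(Uev n k (i + 1)) = k * (n - 1)! := by
      exact_mod_cast card_Uev_succ hk hi.1 (by omega)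
    have hi0 : (i : ℝ) ≠ 0 := by norm_cast; omega
    have hn0 : (n : ℝ) ≠ 0 := by norm_cast; omega
    rw [hfac]
    field_simp
    linear_combination hcard
  rw [card_Usucc, hIoc, sum_map]
  simp only [addRightEmbedding_apply]
  rw [Nat.cast_sum, sum_div, sum_congr rfl hterm, mul_sum]
end

section
/- The success probability of the threshold algorithm satisfies (k/n)(ln n − ln k) ≤ Pr(U) ≤ (k/n)(ln(n−1) − ln(k−1)), where Pr(U) = |U|/n!, for all natural numbers n and k with 2 ≤ k < n. -/
/-!
Fix `i > k` and condition on the overall maximum sitting at position `i`. Swapping two of the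
first `i - 1` entries preserves this condition and moves the maximum of that prefix accordingly,
so the position of the prefix maximum is uniform among the `i - 1` places. Hence
`|U_i| / n! = (1 / n) · k / (i - 1)` and `Pr(U) = (k / n) ∑_{m=k}^{n-1} 1/m`. The harmonic tail
is squeezed between `log n - log k` and `log (n - 1) - log (k - 1)` by telescoping
`log (m + 1) - log m ≤ 1/m ≤ log m - log (m - 1)`.
-/

open Finset Equiv Real
open scoped Nat

namespace Equiv.Perm

variable {α : Type*} [Fintype α]

theorem card_filter_apply_eq_mul_card [DecidableEq α] (a b : α) :
    #{σ : Perm α | σ a = b} * Fintype.card α = (Fintype.card α)! := by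
  let e : Perm α ≃ {σ : Perm α // σ a = b} × α :=
    { toFun := fun τ => (⟨swap b (τ a) * τ, by simp⟩, τ a)
      invFun := fun p => swap b p.2 * p.1.1
      left_inv := fun τ => by simp [← mul_assoc]
      right_inv := fun ⟨⟨σ, hσ⟩, c⟩ => by
        have h : (swap b c * σ) a = c := by simp [hσ]
        ext
        · simp [h, ← mul_assoc]
        · simp [h] }
  rw [← Fintype.card_perm, Fintype.card_congr e, Fintype.card_prod, Fintype.card_subtype]

variable [LinearOrder α]

def maxAt (s : Finset α) (j : α) : Finset (Perm α) := {σ | ∀ x ∈ s, σ x ≤ σ j}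

variable {s t : Finset α} {j j' : α}

theorem mem_maxAt {σ : Perm α} : σ ∈ maxAt s j ↔ ∀ x ∈ s, σ x ≤ σ j := by
  simp [maxAt]

theorem pairwiseDisjoint_inter_maxAt (P : Finset (Perm α)) (s : Finset α) :
    (s : Set α).PairwiseDisjoint fun j => P ∩ maxAt s j := by
  intro j hj j' hj' hne
  refine disjoint_left.2 fun σ h h' => hne (σ.injective (le_antisymm ?_ ?_))
  · exact mem_maxAt.1 (mem_inter.1 h').2 j hj
  · exact mem_maxAt.1 (mem_inter.1 h).2 j' hj'

theorem biUnion_inter_maxAt (P : Finset (Perm α)) (hs : s.Nonempty) :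
    s.biUnion (fun j => P ∩ maxAt s j) = P := by
  ext σ
  simp only [mem_biUnion, mem_inter, mem_maxAt]
  refine ⟨fun ⟨_, _, hσ, _⟩ => hσ, fun hσ => ?_⟩
  obtain ⟨j, hj, hmax⟩ := s.exists_max_image σ hs
  exact ⟨j, hj, hσ, hmax⟩

theorem mul_swap_mem_maxAt {σ : Perm α} (hσ : σ ∈ maxAt s j) (hj : j ∈ s) (hj' : j' ∈ s) :
    σ * swap j j' ∈ maxAt s j' := by
  rw [mem_maxAt] at hσ ⊢
  intro x hx
  have hsx : swap j j' x ∈ s := by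
    rw [swap_apply_def]; split_ifs <;> assumption
  simpa using hσ _ hsx

theorem card_inter_maxAt_mul_card {P : Finset (Perm α)}
    (hP : ∀ σ ∈ P, ∀ x ∈ s, ∀ y ∈ s, σ * swap x y ∈ P) (hj : j ∈ s) :
    #(P ∩ maxAt s j) * #s = #P := by
  have hcard : ∀ j' ∈ s, #(P ∩ maxAt s j') = #(P ∩ maxAt s j) := fun j' hj' => by
    refine card_bij' (fun σ _ => σ * swap j' j) (fun σ _ => σ * swap j j') ?_ ?_ ?_ ?_
    · simp only [mem_inter]
      exact fun σ hσ => ⟨hP σ hσ.1 j' hj' j hj, mul_swap_mem_maxAt hσ.2 hj' hj⟩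
    · simp only [mem_inter]
      exact fun σ hσ => ⟨hP σ hσ.1 j hj j' hj', mul_swap_mem_maxAt hσ.2 hj hj'⟩
    · simp [mul_assoc, swap_comm j' j]
    · simp [mul_assoc, swap_comm j' j]
  have hP_card := card_biUnion (pairwiseDisjoint_inter_maxAt P s)
  rw [biUnion_inter_maxAt P ⟨j, hj⟩, sum_congr rfl hcard, sum_const, smul_eq_mul] at hP_card
  rw [hP_card, mul_comm]

theorem card_inter_biUnion_maxAt_mul_card {P : Finset (Perm α)}
    (hP : ∀ σ ∈ P, ∀ x ∈ s, ∀ y ∈ s, σ * swap x y ∈ P) (ht : t ⊆ s) :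
    #(P ∩ t.biUnion (maxAt s)) * #s = #t * #P := by
  rw [inter_biUnion, card_biUnion ((pairwiseDisjoint_inter_maxAt P s).subset ht), sum_mul,
    ← sum_const_nat fun j hj => card_inter_maxAt_mul_card hP (ht hj)]

end Equiv.Perm

theorem pairwiseDisjoint_Rev (n : ℕ) : (Set.univ : Set ℕ).PairwiseDisjoint (Rev n) := by
  intro i _ i' _ hne
  refine disjoint_left.2 fun σ h h' => hne ?_
  simp only [Rev, mem_filter, mem_univ, true_and] at h h'
  obtain ⟨j, rfl, hj⟩ := h
  obtain ⟨j', rfl, hj'⟩ := h'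
  rw [σ.injective (Fin.ext (by omega) : σ j = σ j')]

theorem Rev_eq_filter_apply_eq {n i : ℕ} (hi : 0 < i) (hin : i ≤ n) :
    Rev n i = ({σ | σ ⟨i - 1, by omega⟩ = ⟨n - 1, by omega⟩} : Finset (Perm (Fin n))) := by
  ext σ
  simp only [Rev, mem_filter, mem_univ, true_and, Fin.ext_iff]
  constructor
  · rintro ⟨j, hj, hσj⟩
    rw [show j = ⟨i - 1, by omega⟩ from Fin.ext (by simp only; omega)] at hσj
    omega
  · exact fun h => ⟨⟨i - 1, by omega⟩, by simp only; omega, by omega⟩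

theorem Tev_eq_biUnion_maxAt (n k i : ℕ) :
    Tev n k i = ({j : Fin n | ↑j < k} : Finset _).biUnion (Perm.maxAt {j | ↑j < i - 1}) := by
  ext σ
  simp only [Tev, Perm.maxAt, mem_filter, mem_univ, true_and, mem_biUnion]
  refine exists_congr fun j => and_congr Nat.add_one_le_iff (forall_congr' fun j' => ?_)
  exact imp_congr_left (by omega)

theorem card_Uev_mul {n k i : ℕ} (hki : k < i) (hin : i ≤ n) :
    #(Uev n k i) * ((i - 1) * n) = k * n ! := by
  set p : Fin n := ⟨i - 1, by omega⟩
  set P : Finset (Perm (Fin n)) := {σ | σ p = ⟨n - 1, by omega⟩}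
  set s : Finset (Fin n) := {j | ↑j < i - 1}
  have hP : ∀ σ ∈ P, ∀ x ∈ s, ∀ y ∈ s, σ * swap x y ∈ P := by
    simp only [P, s, mem_filter, mem_univ, true_and]
    intro σ hσ x hx y hy
    rwa [Perm.mul_apply, swap_apply_of_ne_of_ne (Fin.ne_of_lt hx).symm (Fin.ne_of_lt hy).symm]
  have hcount := Perm.card_inter_biUnion_maxAt_mul_card hP (t := {j : Fin n | ↑j < k})
    (monotone_filter_right _ fun j _ (hj : ↑j < k) => by omega)
  have htop : #P * n = n ! := by
    simpa using Perm.card_filter_apply_eq_mul_card p ⟨n - 1, by omega⟩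
  have hs : #s = i - 1 := by simp only [s, Fin.card_filter_val_lt]; omega
  have ht : #{j : Fin n | ↑j < k} = k := by simp only [Fin.card_filter_val_lt]; omega
  rw [hs, ht] at hcount
  rw [Uev, Rev_eq_filter_apply_eq (by omega) hin, Tev_eq_biUnion_maxAt, ← mul_assoc, hcount,
    mul_assoc, htop]

theorem card_Usucc_div_factorial {n k : ℕ} (hk : 0 < k) :
    (#(Usucc n k) : ℝ) / n ! = k / n * ∑ m ∈ Ico k n, (m : ℝ)⁻¹ := by
  have hdisj : (↑(Ioc k n) : Set ℕ).PairwiseDisjoint (Uev n k) :=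
    ((pairwiseDisjoint_Rev n).subset (Set.subset_univ _)).mono fun _ => inter_subset_left
  have hterm : ∀ i ∈ Ioc k n, (#(Uev n k i) : ℝ) / n ! = k / n * ((i - 1 : ℕ) : ℝ)⁻¹ := by
    intro i hi
    rw [mem_Ioc] at hi
    have h : (#(Uev n k i) : ℝ) * ((i - 1 : ℕ) * n) = k * n ! := by
      exact_mod_cast card_Uev_mul hi.1 hi.2
    have hi1 : ((i - 1 : ℕ) : ℝ) ≠ 0 := by norm_cast; omega
    have hn : (n : ℝ) ≠ 0 := by norm_cast; omega
    field_simp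
    linear_combination h
  rw [Usucc, card_biUnion hdisj, Nat.cast_sum, sum_div, sum_congr rfl hterm, ← mul_sum,
    ← Ico_add_one_add_one_eq_Ioc, ← sum_Ico_add']
  simp

theorem log_add_one_sub_log_le_inv {x : ℝ} (hx : 0 < x) : log (x + 1) - log x ≤ x⁻¹ := by
  have h := log_le_sub_one_of_pos (show 0 < (x + 1) / x by positivity)
  rw [log_div (by positivity) hx.ne'] at h
  rwa [add_div, div_self hx.ne', add_sub_cancel_left, one_div] at h

theorem inv_le_log_sub_log_sub_one {x : ℝ} (hx : 1 < x) : x⁻¹ ≤ log x - log (x - 1) := by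
  have h := one_sub_inv_le_log_of_pos (show 0 < x / (x - 1) by apply div_pos <;> linarith)
  rw [log_div (by linarith) (by linarith), inv_div, sub_div' (by linarith)] at h
  simpa using h

theorem log_sub_log_le_sum_Ico_inv {k n : ℕ} (hk : 0 < k) (hkn : k ≤ n) :
    log n - log k ≤ ∑ m ∈ Ico k n, (m : ℝ)⁻¹ := by
  rw [← sum_Ico_sub (fun m : ℕ => log m) hkn]
  refine sum_le_sum fun m hm => ?_
  have hm : (0 : ℝ) < m := by norm_cast; exact hk.trans_le (mem_Ico.1 hm).1
  simpa using log_add_one_sub_log_le_inv hm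

theorem sum_Ico_inv_le_log_sub_log {k n : ℕ} (hk : 1 < k) (hkn : k ≤ n) :
    ∑ m ∈ Ico k n, (m : ℝ)⁻¹ ≤ log (n - 1) - log (k - 1) := by
  rw [← sum_Ico_sub (fun m : ℕ => log (m - 1)) hkn]
  refine sum_le_sum fun m hm => ?_
  have hm : (1 : ℝ) < m := by norm_cast; exact hk.trans_le (mem_Ico.1 hm).1
  simpa using inv_le_log_sub_log_sub_one hm

theorem stmt6 (n k : ℕ) (hk : 2 ≤ k) (hkn : k < n) :
    ((k : ℝ) / (n : ℝ)) * (Real.log n - Real.log k) ≤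
        ((Usucc n k).card : ℝ) / (Nat.factorial n : ℝ) ∧
      ((Usucc n k).card : ℝ) / (Nat.factorial n : ℝ) ≤
        ((k : ℝ) / (n : ℝ)) * (Real.log ((n : ℝ) - 1) - Real.log ((k : ℝ) - 1)) := by
  rw [card_Usucc_div_factorial (by omega)]
  have hkn_nonneg : (0 : ℝ) ≤ k / n := by positivity
  exact ⟨mul_le_mul_of_nonneg_left (log_sub_log_le_sum_Ico_inv (by omega) hkn.le) hkn_nonneg,
    mul_le_mul_of_nonneg_left (sum_Ico_inv_le_log_sub_log (by omega) hkn.le) hkn_nonneg⟩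
end
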